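/- arXiv:1905.10186 — 5 statements merged into one kernel-verified Lean document; each statement's English description precedes it below -/
import Mathlib

section
/- The function Φ : (0,1) → ℝ defined by Φ(y) = y⁻²(1 − 2y/(log(1+y) − log(1−y))) is monotonically increasing on (0,1). -/
/-- `Φ(y) = y⁻² (1 − 2y / (log(1+y) − log(1−y)))`. -/
noncomputable def Phi (y : ℝ) : ℝ :=
  (1 / y ^ 2) * (1 - 2 * y / (Real.log (1 + y) - Real.log (1 - y)))

/-!
With `L(y) = log(1+y) − log(1−y)` one has `Φ' = 2F / (y³L²)`, where
`F = yL + 2y²/(1−y²) − L²`. Positivity of `F` on `(0,1)` comes from iterating "vanishes at `0`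
and has positive derivative": `F(0) = 0` and `F' = G / (1−y²)²`, where `G(0) = 0` and
`G' = 4y((1+y²)L − 2y)`, which is positive because `L > 2y` (again `L − 2y` vanishes at `0`
and has derivative `2y²/(1−y²)`).
-/

open Real Set

lemma strictMonoOn_of_hasDerivAt_pos {D : Set ℝ} (hD : Convex ℝ D) {f f' : ℝ → ℝ}
    (hf : ∀ x ∈ D, HasDerivAt f (f' x) x) (hf' : ∀ x ∈ interior D, 0 < f' x) :
    StrictMonoOn f D :=
  strictMonoOn_of_hasDerivWithinAt_pos hD
    (fun x hx ↦ (hf x hx).continuousAt.continuousWithinAt)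
    (fun x hx ↦ (hf x (interior_subset hx)).hasDerivWithinAt) hf'

lemma pos_of_hasDerivAt_pos_of_eq_zero {f f' : ℝ → ℝ} {a b : ℝ}
    (hf : ∀ x ∈ Ico a b, HasDerivAt f (f' x) x) (ha : f a = 0)
    (hf' : ∀ x ∈ Ioo a b, 0 < f' x) {x : ℝ} (hx : x ∈ Ioo a b) : 0 < f x := by
  have hmono := strictMonoOn_of_hasDerivAt_pos (convex_Ico a b) hf (by rwa [interior_Ico])
  simpa [ha] using hmono (left_mem_Ico.mpr (hx.1.trans hx.2)) (Ioo_subset_Ico_self hx) hx.1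

noncomputable def logQuot (y : ℝ) : ℝ := log (1 + y) - log (1 - y)

lemma hasDerivAt_logQuot {y : ℝ} (hy : y ∈ Ioo (-1) 1) :
    HasDerivAt logQuot (2 / (1 - y ^ 2)) y := by
  have hpos : 1 + y ≠ 0 := by linarith [hy.1]
  have hneg : 1 - y ≠ 0 := by linarith [hy.2]
  have := (((hasDerivAt_id y).const_add 1).log hpos).sub (((hasDerivAt_id y).const_sub 1).log hneg)
  refine this.congr_deriv ?_
  rw [show (1 : ℝ) - y ^ 2 = (1 + y) * (1 - y) by ring, id]
  field_simp
  ring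

lemma two_mul_lt_logQuot {y : ℝ} (hy : y ∈ Ioo 0 1) : 2 * y < logQuot y := by
  have hderiv : ∀ x ∈ Ico (0 : ℝ) 1,
      HasDerivAt (fun x ↦ logQuot x - 2 * x) (2 / (1 - x ^ 2) - 2) x := fun x hx ↦
    (hasDerivAt_logQuot ⟨by linarith [hx.1], hx.2⟩).sub (by simpa using (hasDerivAt_id x).const_mul 2)
  have := pos_of_hasDerivAt_pos_of_eq_zero hderiv (by simp [logQuot]) (fun x hx ↦ ?_) hy
  · linarith
  · have : 1 - x ^ 2 ∈ Ioo 0 1 := ⟨by nlinarith [hx.1, hx.2], by nlinarith [hx.1]⟩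
    rw [sub_pos, lt_div_iff₀ this.1]
    linarith [this.2]

lemma logQuot_pos {y : ℝ} (hy : y ∈ Ioo 0 1) : 0 < logQuot y := by
  linarith [two_mul_lt_logQuot hy, hy.1]

noncomputable def phiDerivNumDerivNum (y : ℝ) : ℝ :=
  2 * y * (3 - y ^ 2) - (3 + y ^ 2) * (1 - y ^ 2) * logQuot y

lemma hasDerivAt_phiDerivNumDerivNum {y : ℝ} (hy : y ∈ Ioo (-1) 1) :
    HasDerivAt phiDerivNumDerivNum (4 * y * ((1 + y ^ 2) * logQuot y - 2 * y)) y := by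
  have hy2 : 1 - y ^ 2 ≠ 0 := by nlinarith [hy.1, hy.2]
  have hsq := hasDerivAt_pow 2 y
  refine ((((hasDerivAt_id y).const_mul 2).mul (hsq.const_sub 3)).sub
    (((hsq.const_add 3).mul (hsq.const_sub 1)).mul (hasDerivAt_logQuot hy))).congr_deriv ?_
  simp only [id, Pi.mul_apply]
  field_simp
  ring

lemma phiDerivNumDerivNum_pos {y : ℝ} (hy : y ∈ Ioo 0 1) : 0 < phiDerivNumDerivNum y := by
  refine pos_of_hasDerivAt_pos_of_eq_zero
    (fun x hx ↦ hasDerivAt_phiDerivNumDerivNum ⟨by linarith [hx.1], hx.2⟩)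
    (by simp [phiDerivNumDerivNum, logQuot]) (fun x hx ↦ ?_) hy
  have hL := two_mul_lt_logQuot hx
  have : 0 < (1 + x ^ 2) * logQuot x - 2 * x := by nlinarith [hx.1]
  exact mul_pos (by linarith [hx.1]) this

noncomputable def phiDerivNum (y : ℝ) : ℝ :=
  y * logQuot y + 2 * y ^ 2 / (1 - y ^ 2) - logQuot y ^ 2

lemma hasDerivAt_phiDerivNum {y : ℝ} (hy : y ∈ Ioo (-1) 1) :
    HasDerivAt phiDerivNum (phiDerivNumDerivNum y / (1 - y ^ 2) ^ 2) y := by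
  have hy2 : 1 - y ^ 2 ≠ 0 := by nlinarith [hy.1, hy.2]
  have hL := hasDerivAt_logQuot hy
  have hsq := hasDerivAt_pow 2 y
  refine ((((hasDerivAt_id y).mul hL).add ((hsq.const_mul 2).div (hsq.const_sub 1) hy2)).sub
    (hL.pow 2)).congr_deriv ?_
  simp only [id, phiDerivNumDerivNum]
  field_simp
  ring

lemma phiDerivNum_pos {y : ℝ} (hy : y ∈ Ioo 0 1) : 0 < phiDerivNum y :=
  pos_of_hasDerivAt_pos_of_eq_zero
    (fun x hx ↦ hasDerivAt_phiDerivNum ⟨by linarith [hx.1], hx.2⟩)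
    (by simp [phiDerivNum, logQuot])
    (fun x hx ↦ div_pos (phiDerivNumDerivNum_pos hx) (pow_pos (by nlinarith [hx.1, hx.2]) 2)) hy

lemma hasDerivAt_Phi {y : ℝ} (hy : y ∈ Ioo 0 1) :
    HasDerivAt Phi (2 * phiDerivNum y / (y ^ 3 * logQuot y ^ 2)) y := by
  have hy0 : y ≠ 0 := hy.1.ne'
  have hL0 : logQuot y ≠ 0 := (logQuot_pos hy).ne'
  have hL := hasDerivAt_logQuot ⟨by linarith [hy.1], hy.2⟩
  refine (((hasDerivAt_const y 1).div (hasDerivAt_pow 2 y) (pow_ne_zero 2 hy0)).mul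
    ((((hasDerivAt_id y).const_mul 2).div hL hL0).const_sub 1)).congr_deriv ?_
  simp only [id, Pi.div_apply, phiDerivNum]
  field_simp
  ring

/-- The function `Φ` is monotonically increasing on the interval `(0,1)`. -/
theorem Phi_strictMonoOn : StrictMonoOn Phi (Set.Ioo 0 1) := by
  refine strictMonoOn_of_hasDerivAt_pos (convex_Ioo 0 1) (fun y hy ↦ hasDerivAt_Phi hy) ?_
  rw [interior_Ioo]
  intro y hy
  exact div_pos (mul_pos two_pos (phiDerivNum_pos hy))
    (mul_pos (pow_pos hy.1 3) (pow_pos (logQuot_pos hy) 2))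
end

section
/- For every y ∈ (0,1) one has 0 < Φ(y) < 1, where Φ(y) = y⁻²(1 − 2y/(log(1+y) − log(1−y))). Consequently, for every λ > 0, every v ∈ ℝ³ with 0 < |v| < 1 and every k ∈ {1,2,3}, the coefficient b_k[v] = λ (v_k/|v|²)(1 − 2|v|/(log(1+|v|) − log(1−|v|))) satisfies |b_k[v]| < λ. -/
/-- `b_k[v] = λ (v_k/|v|²)(1 − 2|v|/(log(1+|v|) − log(1−|v|)))`. -/
noncomputable def bcoef (lam : ℝ) (v : EuclideanSpace ℝ (Fin 3)) (k : Fin 3) : ℝ :=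
  lam * (v k / ‖v‖ ^ 2) * (1 - 2 * ‖v‖ / (Real.log (1 + ‖v‖) - Real.log (1 - ‖v‖)))

open Real

section LogSubLog

variable {y : ℝ}

lemma two_mul_lt_log_sub_log (hy : y ∈ Set.Ioo (0 : ℝ) 1) :
    2 * y < log (1 + y) - log (1 - y) := by
  obtain ⟨hy0, hy1⟩ := hy
  refine hasSum_lt (f := fun k : ℕ => if k = 0 then 2 * y else 0) (i := 1) (fun k => ?_)
    (by norm_num; positivity) (hasSum_ite_eq 0 _)
    (hasSum_log_sub_log_of_abs_lt_one (abs_lt.mpr ⟨by linarith, hy1⟩))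
  rcases eq_or_ne k 0 with rfl | hk
  · simp
  · simp only [hk, if_false]
    positivity

lemma log_sub_log_lt_two_mul_div (hy : y ∈ Set.Ioo (0 : ℝ) 1) :
    log (1 + y) - log (1 - y) < 2 * y / (1 - y ^ 2) := by
  obtain ⟨hy0, hy1⟩ := hy
  have hy2 : y ^ 2 < 1 := by nlinarith
  have hgeom : HasSum (fun k : ℕ => 2 * y * (y ^ 2) ^ k) (2 * y / (1 - y ^ 2)) := by
    simpa [div_eq_mul_inv] using
      (hasSum_geometric_of_lt_one (by positivity) hy2).mul_left (2 * y)
  refine hasSum_lt (i := 1) (fun k => ?_) ?_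
    (hasSum_log_sub_log_of_abs_lt_one (abs_lt.mpr ⟨by linarith, hy1⟩)) hgeom
  · have hk : 1 / (2 * (k : ℝ) + 1) ≤ 1 := div_le_one_of_le₀ (by linarith [k.cast_nonneg (α := ℝ)])
      (by positivity)
    calc 2 * (1 / (2 * (k : ℝ) + 1)) * y ^ (2 * k + 1)
        ≤ 2 * 1 * y ^ (2 * k + 1) := by gcongr
      _ = 2 * y * (y ^ 2) ^ k := by ring
  · norm_num
    nlinarith [pow_pos hy0 3]

end LogSubLog

lemma Phi_mem_Ioo {y : ℝ} (hy : y ∈ Set.Ioo (0 : ℝ) 1) : Phi y ∈ Set.Ioo (0 : ℝ) 1 := by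
  have hlower := two_mul_lt_log_sub_log hy
  have hupper := log_sub_log_lt_two_mul_div hy
  obtain ⟨hy0, hy1⟩ := hy
  set L := log (1 + y) - log (1 - y)
  have hL : 0 < L := by linarith
  have hy2 : 0 < 1 - y ^ 2 := by nlinarith
  rw [lt_div_iff₀ hy2] at hupper
  unfold Phi
  constructor
  · have : 2 * y / L < 1 := (div_lt_one hL).mpr hlower
    exact mul_pos (by positivity) (by linarith)
  · have : 1 - y ^ 2 < 2 * y / L := by rw [lt_div_iff₀ hL]; linarith
    rw [one_div_mul_eq_div, div_lt_one (by positivity)]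
    linarith

lemma bcoef_eq_mul_Phi (lam : ℝ) (v : EuclideanSpace ℝ (Fin 3)) (k : Fin 3) :
    bcoef lam v k = lam * v k * Phi ‖v‖ := by
  unfold bcoef Phi
  ring

lemma abs_bcoef_lt {lam : ℝ} (hlam : 0 < lam) {v : EuclideanSpace ℝ (Fin 3)}
    (hv : ‖v‖ ∈ Set.Ioo (0 : ℝ) 1) (k : Fin 3) : |bcoef lam v k| < lam := by
  obtain ⟨hPhi0, hPhi1⟩ := Phi_mem_Ioo hv
  have hvk : |v k| ≤ ‖v‖ := by simpa using PiLp.norm_apply_le v k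
  rw [bcoef_eq_mul_Phi, abs_mul, abs_mul, abs_of_pos hlam, abs_of_pos hPhi0, mul_assoc]
  refine mul_lt_of_lt_one_right hlam ?_
  calc |v k| * Phi ‖v‖ ≤ ‖v‖ * Phi ‖v‖ := by gcongr
    _ < 1 := by nlinarith [hv.2]

/-- For every `y ∈ (0,1)` one has `0 < Φ(y) < 1`; consequently, for every `λ > 0`,
every `v ∈ ℝ³` with `0 < |v| < 1` and every `k`, the coefficient `b_k[v]`
satisfies `|b_k[v]| < λ`. -/
theorem Phi_bounds_and_bcoef_lt :
    (∀ y ∈ Set.Ioo (0 : ℝ) 1, 0 < Phi y ∧ Phi y < 1) ∧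
    (∀ lam : ℝ, 0 < lam → ∀ v : EuclideanSpace ℝ (Fin 3), 0 < ‖v‖ → ‖v‖ < 1 →
      ∀ k : Fin 3, |bcoef lam v k| < lam) :=
  ⟨fun _ hy => Phi_mem_Ioo hy, fun _ hlam _ hv0 hv1 k => abs_bcoef_lt hlam ⟨hv0, hv1⟩ k⟩
end

section
/- Let ζ ∈ (−1,1), let ω ∈ ℝ³ with |ω| = 1, and set P = σ₀ + ζ ω·σ (a Hermitian positive definite 2×2 complex matrix), where ω·σ = ω₁σ₁ + ω₂σ₂ + ω₃σ₃. Let P^{1/2} denote the unique positive definite square root of P, and P^{−1/2} its inverse. Then for all a₀ ∈ ℝ and a ∈ ℝ³: P^{−1/2}(a₀σ₀ + a·σ)P^{−1/2} = (1−ζ²)^{−1}(a₀ − ζ ω·a) σ₀ + (1−ζ²)^{−1} [−ζ a₀ ω + (ω⊗ω + √(1−ζ²)(I − ω⊗ω)) a]·σ, where I is the 3×3 identity matrix and (ω⊗ω)a = (ω·a)ω. -/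
open Matrix
open scoped ComplexOrder

noncomputable def pauli : Fin 3 → Matrix (Fin 2) (Fin 2) ℂ
  | 0 => !![0, 1; 1, 0]
  | 1 => !![0, -Complex.I; Complex.I, 0]
  | 2 => !![1, 0; 0, -1]

noncomputable def dotSigma (b : Fin 3 → ℝ) : Matrix (Fin 2) (Fin 2) ℂ :=
  ∑ i, (b i : ℂ) • pauli i

/-!
Since `(ω·σ)² = 1`, the matrix `R = cos φ + sin φ ω·σ` with `φ = arcsin ζ / 2` squares to
`1 + sin 2φ ω·σ = P`; it is positive definite because its trace `2 cos φ` and its determinant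
`cos 2φ = √(1 - ζ²)` are positive, and positive square roots are unique. Its inverse
`(cos φ - sin φ ω·σ) / cos 2φ` is again of the form `γ + b·σ`, so the formula is an instance of
the Pauli-algebra identity for `(γ + b·σ)(a₀ + a·σ)(γ + b·σ)`.
-/

lemma Matrix.IsHermitian.posDef_of_trace_pos_of_det_pos {𝕜 : Type*} [RCLike 𝕜]
    {A : Matrix (Fin 2) (Fin 2) 𝕜} (hA : A.IsHermitian) (htr : 0 < A.trace) (hdet : 0 < A.det) :
    A.PosDef := by
  rw [hA.trace_eq_sum_eigenvalues, Fin.sum_univ_two, ← RCLike.ofReal_add,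
    RCLike.ofReal_pos] at htr
  rw [hA.det_eq_prod_eigenvalues, Fin.prod_univ_two, ← RCLike.ofReal_mul,
    RCLike.ofReal_pos] at hdet
  rw [hA.posDef_iff_eigenvalues_pos, Fin.forall_fin_two]
  constructor <;> nlinarith

lemma Matrix.PosSemidef.eq_of_mul_self_eq {n 𝕜 : Type*} [Fintype n] [DecidableEq n] [RCLike 𝕜]
    {A B : Matrix n n 𝕜} (hA : A.PosSemidef) (hB : B.PosSemidef) (h : A * A = B * B) :
    A = B := by
  open scoped MatrixOrder in
  exact (CFC.mul_self_eq_mul_self_iff A B hA.nonneg hB.nonneg).mp h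

lemma smul_dotProduct_smul_self {m R : Type*} [Fintype m] [CommRing R] (c : R) (v : m → R) :
    (c • v) ⬝ᵥ (c • v) = c ^ 2 * (v ⬝ᵥ v) := by
  rw [smul_dotProduct, dotProduct_smul, smul_eq_mul, smul_eq_mul, sq, mul_assoc]

lemma dotSigma_eq (b : Fin 3 → ℝ) :
    dotSigma b = !![(b 2 : ℂ), b 0 - b 1 * Complex.I; b 0 + b 1 * Complex.I, -(b 2 : ℂ)] := by
  ext i j
  fin_cases i <;> fin_cases j <;> simp [dotSigma, pauli, Fin.sum_univ_three]
  ring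

lemma dotSigma_smul (c : ℝ) (b : Fin 3 → ℝ) : dotSigma (c • b) = (c : ℂ) • dotSigma b := by
  simp only [dotSigma, Pi.smul_apply, smul_eq_mul, Complex.ofReal_mul, Finset.smul_sum, smul_smul]

@[simp] lemma dotSigma_zero : dotSigma 0 = 0 := by simp [dotSigma]

lemma smul_smul_one_add_dotSigma (k c₀ : ℝ) (b : Fin 3 → ℝ) :
    k • ((c₀ : ℂ) • (1 : Matrix (Fin 2) (Fin 2) ℂ) + dotSigma b)
      = ((k * c₀ : ℝ) : ℂ) • 1 + dotSigma (k • b) := by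
  rw [dotSigma_smul, ← Complex.coe_smul, smul_add, smul_smul]
  push_cast; rfl

lemma smul_one_add_dotSigma_mul (a₀ b₀ : ℝ) (a b : Fin 3 → ℝ) :
    ((a₀ : ℂ) • (1 : Matrix (Fin 2) (Fin 2) ℂ) + dotSigma a) * ((b₀ : ℂ) • 1 + dotSigma b)
      = ((a₀ * b₀ + a ⬝ᵥ b : ℝ) : ℂ) • 1 + dotSigma (a₀ • b + b₀ • a)
        + Complex.I • dotSigma (a ⨯₃ b) := by
  simp only [dotSigma_eq]
  ext i j
  fin_cases i <;> fin_cases j <;>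
    simp [Complex.ext_iff, Matrix.mul_apply, Fin.sum_univ_two, Fin.sum_univ_three, dotProduct,
      cross_apply] <;> constructor <;> ring

lemma smul_one_add_dotSigma_sandwich (α c₀ : ℝ) (b f : Fin 3 → ℝ) :
    ((α : ℂ) • (1 : Matrix (Fin 2) (Fin 2) ℂ) + dotSigma b) * ((c₀ : ℂ) • 1 + dotSigma f) *
        ((α : ℂ) • 1 + dotSigma b)
      = ((α ^ 2 * c₀ + 2 * α * (b ⬝ᵥ f) + c₀ * (b ⬝ᵥ b) : ℝ) : ℂ) • 1
        + dotSigma ((2 * α * c₀ + 2 * (b ⬝ᵥ f)) • b + (α ^ 2 - b ⬝ᵥ b) • f) := by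
  simp only [dotSigma_eq]
  ext i j
  fin_cases i <;> fin_cases j <;>
    simp [Complex.ext_iff, sq, Matrix.mul_apply, Fin.sum_univ_two, Fin.sum_univ_three,
      dotProduct] <;> constructor <;> ring

lemma isHermitian_smul_one_add_dotSigma (α : ℝ) (b : Fin 3 → ℝ) :
    ((α : ℂ) • (1 : Matrix (Fin 2) (Fin 2) ℂ) + dotSigma b).IsHermitian := by
  rw [dotSigma_eq]
  ext i j
  fin_cases i <;> fin_cases j <;> simp [Matrix.conjTranspose_apply, Complex.ext_iff]

lemma trace_smul_one_add_dotSigma (α : ℝ) (b : Fin 3 → ℝ) :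
    ((α : ℂ) • (1 : Matrix (Fin 2) (Fin 2) ℂ) + dotSigma b).trace = ((2 * α : ℝ) : ℂ) := by
  rw [dotSigma_eq, trace_fin_two]
  simp
  ring

lemma det_smul_one_add_dotSigma (α : ℝ) (b : Fin 3 → ℝ) :
    ((α : ℂ) • (1 : Matrix (Fin 2) (Fin 2) ℂ) + dotSigma b).det = ((α ^ 2 - b ⬝ᵥ b : ℝ) : ℂ) := by
  rw [dotSigma_eq, det_fin_two]
  simp [Complex.ext_iff, dotProduct, Fin.sum_univ_three, sq]
  constructor <;> ring

lemma posDef_smul_one_add_dotSigma {α : ℝ} {b : Fin 3 → ℝ} (hα : 0 < α) (hb : b ⬝ᵥ b < α ^ 2) :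
    ((α : ℂ) • (1 : Matrix (Fin 2) (Fin 2) ℂ) + dotSigma b).PosDef := by
  refine (isHermitian_smul_one_add_dotSigma α b).posDef_of_trace_pos_of_det_pos ?_ ?_
  · rw [trace_smul_one_add_dotSigma, Complex.zero_lt_real]
    positivity
  · rw [det_smul_one_add_dotSigma, Complex.zero_lt_real]
    linarith

lemma inv_smul_one_add_dotSigma {α : ℝ} {b : Fin 3 → ℝ} (h : α ^ 2 - b ⬝ᵥ b ≠ 0) :
    ((α : ℂ) • (1 : Matrix (Fin 2) (Fin 2) ℂ) + dotSigma b)⁻¹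
      = ((α / (α ^ 2 - b ⬝ᵥ b) : ℝ) : ℂ) • 1 + dotSigma (-(α ^ 2 - b ⬝ᵥ b)⁻¹ • b) := by
  refine Matrix.inv_eq_right_inv ?_
  have hscalar : α * (α / (α ^ 2 - b ⬝ᵥ b)) + b ⬝ᵥ (-(α ^ 2 - b ⬝ᵥ b)⁻¹ • b) = 1 := by
    rw [dotProduct_smul, smul_eq_mul]
    field_simp
    ring
  have hvector : α • (-(α ^ 2 - b ⬝ᵥ b)⁻¹ • b) + (α / (α ^ 2 - b ⬝ᵥ b)) • b = 0 := by
    rw [smul_smul, ← add_smul, div_eq_mul_inv, mul_neg, neg_add_cancel, zero_smul]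
  rw [smul_one_add_dotSigma_mul, hscalar, hvector, LinearMap.map_smul, cross_self]
  simp

lemma smul_one_add_dotSigma_mul_self (α : ℝ) (b : Fin 3 → ℝ) :
    ((α : ℂ) • (1 : Matrix (Fin 2) (Fin 2) ℂ) + dotSigma b) * ((α : ℂ) • 1 + dotSigma b)
      = ((α ^ 2 + b ⬝ᵥ b : ℝ) : ℂ) • 1 + dotSigma ((2 * α) • b) := by
  rw [smul_one_add_dotSigma_mul, cross_self, dotSigma_zero, smul_zero, add_zero, ← add_smul,
    sq, two_mul]

open Real in
lemma exists_cos_sin_half_arcsin {ζ : ℝ} (hζ : ζ ∈ Set.Icc (-1 : ℝ) 1) :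
    ∃ α β : ℝ, 0 < α ∧ α ^ 2 + β ^ 2 = 1 ∧ 2 * α * β = ζ ∧ α ^ 2 - β ^ 2 = √(1 - ζ ^ 2) := by
  obtain ⟨φ, hφ⟩ : ∃ φ, arcsin ζ = 2 * φ := ⟨arcsin ζ / 2, by ring⟩
  refine ⟨cos φ, sin φ, cos_pos_of_mem_Ioo ⟨?_, ?_⟩, cos_sq_add_sin_sq φ, ?_, ?_⟩
  · linarith [neg_pi_div_two_le_arcsin ζ, pi_pos]
  · linarith [arcsin_le_pi_div_two ζ, pi_pos]
  · rw [mul_right_comm, ← sin_two_mul, ← hφ, sin_arcsin hζ.1 hζ.2]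
  · rw [← cos_arcsin, hφ, cos_two_mul]
    linear_combination -cos_sq_add_sin_sq φ

lemma smul_one_add_dotSigma_mul_self_eq_one_add {α β ζ : ℝ} {ω : Fin 3 → ℝ}
    (hω : ω ⬝ᵥ ω = 1) (hsum : α ^ 2 + β ^ 2 = 1) (hprod : 2 * α * β = ζ) :
    ((α : ℂ) • (1 : Matrix (Fin 2) (Fin 2) ℂ) + dotSigma (β • ω)) * ((α : ℂ) • 1 + dotSigma (β • ω))
      = 1 + dotSigma (ζ • ω) := by
  rw [smul_one_add_dotSigma_mul_self, smul_smul, hprod, smul_dotProduct_smul_self, hω, mul_one,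
    hsum, Complex.ofReal_one, one_smul]

lemma inv_smul_one_add_dotSigma_sandwich {α β ζ : ℝ} {ω : Fin 3 → ℝ} (hω : ω ⬝ᵥ ω = 1)
    (hsum : α ^ 2 + β ^ 2 = 1) (hprod : 2 * α * β = ζ) (hdiff : α ^ 2 - β ^ 2 = √(1 - ζ ^ 2))
    (hζ : ζ ^ 2 < 1) (a₀ : ℝ) (a : Fin 3 → ℝ) :
    ((α : ℂ) • (1 : Matrix (Fin 2) (Fin 2) ℂ) + dotSigma (β • ω))⁻¹
        * ((a₀ : ℂ) • 1 + dotSigma a) * ((α : ℂ) • 1 + dotSigma (β • ω))⁻¹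
      = (1 - ζ ^ 2)⁻¹ • (((a₀ - ζ * (ω ⬝ᵥ a) : ℝ) : ℂ) • 1 + dotSigma (fun j =>
          -(ζ * a₀) * ω j + (ω ⬝ᵥ a) * ω j + √(1 - ζ ^ 2) * (a j - (ω ⬝ᵥ a) * ω j))) := by
  set s := √(1 - ζ ^ 2)
  set t := ω ⬝ᵥ a
  have hs : 0 < s := Real.sqrt_pos.2 (by linarith)
  have hs2 : s ^ 2 = 1 - ζ ^ 2 := Real.sq_sqrt (by linarith)
  rw [inv_smul_one_add_dotSigma (by rw [smul_dotProduct_smul_self, hω]; linarith),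
    smul_dotProduct_smul_self, hω, mul_one, hdiff, smul_one_add_dotSigma_sandwich,
    smul_smul_one_add_dotSigma, smul_smul, smul_dotProduct_smul_self, hω, smul_dotProduct,
    smul_eq_mul, ← hs2]
  congr 2
  · congr 1
    field_simp
    linear_combination a₀ * hsum - t * hprod
  · ext j
    simp only [Pi.add_apply, Pi.smul_apply, smul_eq_mul]
    field_simp
    linear_combination -a₀ * ω j * hprod + t * ω j * (hsum - hdiff) + a j * hdiff

/-- For `ζ ∈ (−1,1)` and `ω ∈ ℝ³` with `|ω| = 1`, the polarization matrix
`P = σ₀ + ζ ω·σ` is Hermitian positive definite, it has a unique positive definite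
square root `P^{1/2}`, and for every such square root `R = P^{1/2}` and all `a₀ ∈ ℝ`,
`a ∈ ℝ³`:
`P^{−1/2}(a₀σ₀ + a·σ)P^{−1/2} = (1−ζ²)⁻¹(a₀ − ζ ω·a) σ₀
  + (1−ζ²)⁻¹ [−ζ a₀ ω + (ω⊗ω + √(1−ζ²)(I − ω⊗ω)) a]·σ`. -/
theorem sandwich_inv_sqrt_polarization (ζ : ℝ) (hζ : ζ ∈ Set.Ioo (-1 : ℝ) 1)
    (ω : Fin 3 → ℝ) (hω : ∑ i, (ω i) ^ 2 = 1) :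
    ((1 : Matrix (Fin 2) (Fin 2) ℂ) + dotSigma (fun i => ζ * ω i)).PosDef ∧
    (∃! R : Matrix (Fin 2) (Fin 2) ℂ,
      R.PosDef ∧ R * R = (1 : Matrix (Fin 2) (Fin 2) ℂ) + dotSigma (fun i => ζ * ω i)) ∧
    (∀ R : Matrix (Fin 2) (Fin 2) ℂ,
      R.PosDef → R * R = (1 : Matrix (Fin 2) (Fin 2) ℂ) + dotSigma (fun i => ζ * ω i) →
      ∀ (a₀ : ℝ) (a : Fin 3 → ℝ),
        R⁻¹ * (((a₀ : ℂ) • (1 : Matrix (Fin 2) (Fin 2) ℂ)) + dotSigma a) * R⁻¹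
          = ((1 - ζ ^ 2)⁻¹ : ℝ) •
              ((((a₀ - ζ * ∑ i, ω i * a i : ℝ) : ℂ) • (1 : Matrix (Fin 2) (Fin 2) ℂ))
                + dotSigma (fun j =>
                    -(ζ * a₀) * ω j + (∑ i, ω i * a i) * ω j
                      + Real.sqrt (1 - ζ ^ 2) * (a j - (∑ i, ω i * a i) * ω j)))) := by
  obtain ⟨α, β, hα, hsum, hprod, hdiff⟩ := exists_cos_sin_half_arcsin (Set.Ioo_subset_Icc_self hζ)
  have hωω : ω ⬝ᵥ ω = 1 := by simpa [dotProduct, sq] using hω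
  have hζ2 : ζ ^ 2 < 1 := by nlinarith [hζ.1, hζ.2]
  set R₀ := (α : ℂ) • (1 : Matrix (Fin 2) (Fin 2) ℂ) + dotSigma (β • ω)
  have hβα : β ^ 2 < α ^ 2 := by linarith [Real.sqrt_pos.2 (sub_pos.2 hζ2)]
  have hR₀ : R₀.PosDef :=
    posDef_smul_one_add_dotSigma hα (by rwa [smul_dotProduct_smul_self, hωω, mul_one])
  have hR₀sq : R₀ * R₀ = 1 + dotSigma (ζ • ω) :=
    smul_one_add_dotSigma_mul_self_eq_one_add hωω hsum hprod
  have hP : (1 + dotSigma (ζ • ω)).PosDef := by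
    simpa using posDef_smul_one_add_dotSigma one_pos (b := ζ • ω) (by
      rwa [smul_dotProduct_smul_self, hωω, mul_one, one_pow])
  have huniq (R : Matrix (Fin 2) (Fin 2) ℂ) (hR : R.PosDef) (hRR : R * R = 1 + dotSigma (ζ • ω)) :
      R = R₀ :=
    hR.posSemidef.eq_of_mul_self_eq hR₀.posSemidef (hRR.trans hR₀sq.symm)
  refine ⟨hP, ⟨R₀, ⟨hR₀, hR₀sq⟩, fun R hR => huniq R hR.1 hR.2⟩, fun R hR hRR a₀ a => ?_⟩
  rw [huniq R hR hRR]
  exact inv_smul_one_add_dotSigma_sandwich hωω hsum hprod hdiff hζ2 a₀ a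
end

section
/- Let Ω ⊂ ℝ² be a bounded open set, T > 0, λ_D > 0, and let C : Ω̄ → ℝ be continuous with C ≥ 0. Suppose n₀, V : Ω̄ × [0,T] → ℝ are continuous, C² in x and C¹ in t on Ω × (0,T], and satisfy pointwise in Ω × (0,T] the drift-diffusion–Poisson system ∂_t n₀ = div(∇n₀ + n₀∇V) and −λ_D² ΔV = n₀ − C. Set M = max{ sup_{∂Ω×[0,T]} n₀, sup_Ω n₀(·,0), sup_Ω C }. Then n₀ ≤ M on Ω × [0,T]. -/
open Real Set

/-- Spatial partial derivative `∂_k` on `ℝ²` of a scalar field, with the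
convention `∂₃ = 0` (the index `k = 2`, i.e. the third one, gives `0`). -/
noncomputable def pd (k : Fin 3) (f : (Fin 2 → ℝ) → ℝ) (x : Fin 2 → ℝ) : ℝ :=
  fderiv ℝ f x (fun s : Fin 2 => if (s : ℕ) = (k : ℕ) then 1 else 0)

/-- `curl v = (∂₂v₃, −∂₁v₃, ∂₁v₂ − ∂₂v₁)` of a 3-component field on `ℝ²`. -/
noncomputable def curl3 (v : (Fin 2 → ℝ) → Fin 3 → ℝ) (x : Fin 2 → ℝ) : Fin 3 → ℝ :=
  ![pd 1 (fun y => v y 2) x, -(pd 0 (fun y => v y 2) x),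
    pd 0 (fun y => v y 1) x - pd 1 (fun y => v y 0) x]

/-- `G[v] = ‖∇v‖² + 2 v·curl v + 2|v|²`. -/
noncomputable def Gfun (v : (Fin 2 → ℝ) → Fin 3 → ℝ) (x : Fin 2 → ℝ) : ℝ :=
  (∑ s : Fin 2, ∑ j : Fin 3, (pd s.castSucc (fun y => v y j) x) ^ 2)
    + 2 * ∑ j : Fin 3, v x j * curl3 v x j
    + 2 * ∑ j : Fin 3, (v x j) ^ 2

/-- The gradient `∇f = (∂₁f, ∂₂f)` of a scalar field on `ℝ²`. -/
noncomputable def grad (f : (Fin 2 → ℝ) → ℝ) (x : Fin 2 → ℝ) : Fin 2 → ℝ :=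
  fun s => pd s.castSucc f x

/-- Euclidean dot product on `ℝ²`. -/
def dot2 (a b : Fin 2 → ℝ) : ℝ := ∑ s : Fin 2, a s * b s

/-!
Perturb `n₀` to `w = n₀ - ε t` with `ε > 0` so small that `w` still exceeds `M` somewhere,
and take a maximum point `(x₀, t₀)` of `w` on the compact set `Ω̄ × [0, T]`. Since `w > M` there,
`x₀` is not on `∂Ω` and `t₀ ≠ 0`. At `x₀` the spatial gradient of `n₀` vanishes and its Laplacian
is `≤ 0`, so the equation gives `∂_t n₀ ≤ n₀ ΔV`, which is negative because `n₀ > M ≥ C ≥ 0`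
and hence `λ_D² ΔV = C - n₀ < 0`.
But `t ↦ w(x₀, t)` is maximal on `[0, t₀]` at `t₀`, so `∂_t n₀ ≥ ε > 0`.
-/

open Filter Topology

theorem IsCompact.le_sSup_image_of_subset {X : Type*} [TopologicalSpace X] {K s : Set X}
    {f : X → ℝ} (hK : IsCompact K) (hf : ContinuousOn f K) (hs : s ⊆ K) {x : X} (hx : x ∈ s) :
    f x ≤ sSup (f '' s) :=
  le_csSup ((hK.bddAbove_image hf).mono (image_mono hs)) (mem_image_of_mem f hx)

theorem HasDerivAt.nonneg_of_isMaxOn_Icc {u : ℝ → ℝ} {d a b : ℝ} (hu : HasDerivAt u d b)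
    (hab : a < b) (hmax : IsMaxOn u (Icc a b) b) : 0 ≤ d := by
  have hcone : a - b ∈ posTangentConeAt (Icc a b) b :=
    sub_mem_posTangentConeAt_of_segment_subset (by rw [segment_symm, segment_eq_Icc hab.le])
  have h := hmax.localize.hasFDerivWithinAt_nonpos hu.hasFDerivAt.hasFDerivWithinAt hcone
  rw [ContinuousLinearMap.toSpanSingleton_apply, smul_eq_mul] at h
  exact nonneg_of_mul_nonpos_right h (sub_neg.2 hab)

theorem ContDiffAt.differentiableAt_fderiv_apply {E : Type*} [NormedAddCommGroup E]
    [NormedSpace ℝ E] {f : E → ℝ} {x₀ : E} (hf : ContDiffAt ℝ 2 f x₀) (v : E) :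
    DifferentiableAt ℝ (fun y => fderiv ℝ f y v) x₀ :=
  ((hf.fderiv_right (m := 1) (by norm_num)).clm_apply contDiffAt_const).differentiableAt
    (by norm_num)

theorem IsLocalMax.deriv_deriv_nonpos {f : ℝ → ℝ} {a : ℝ} (h : IsLocalMax f a)
    (hc : ContinuousAt f a) : deriv (deriv f) a ≤ 0 := by
  by_contra! hpos
  have hconst : f =ᶠ[𝓝 a] fun _ => f a := by
    filter_upwards [h, isLocalMin_of_deriv_deriv_pos hpos h.deriv_eq_zero hc] with x hmax hmin
    exact le_antisymm hmax hmin
  simp [hconst.deriv.deriv_eq] at hpos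

theorem IsLocalMax.fderiv_fderiv_apply_nonpos {E : Type*} [NormedAddCommGroup E]
    [NormedSpace ℝ E] {f : E → ℝ} {x₀ : E} (h : IsLocalMax f x₀) (hf : ContDiffAt ℝ 2 f x₀)
    (v : E) : fderiv ℝ (fun y => fderiv ℝ f y v) x₀ v ≤ 0 := by
  set line : ℝ → E := fun r => x₀ + r • v
  have hline : ∀ r, HasDerivAt line v r := fun r => by
    simpa only [id, one_smul] using ((hasDerivAt_id r).smul_const v).const_add x₀
  have hline0 : line 0 = x₀ := by simp [line]
  have hdiff : ∀ᶠ r in 𝓝 0, DifferentiableAt ℝ f (line r) := by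
    refine (hline 0).continuousAt.eventually ?_
    rw [hline0]
    exact (hf.eventually (by simp)).mono fun y hy => hy.differentiableAt (by norm_num)
  have hderiv : deriv (f ∘ line) =ᶠ[𝓝 0] fun r => fderiv ℝ f (line r) v := by
    filter_upwards [hdiff] with r hr
    exact (hr.hasFDerivAt.comp_hasDerivAt r (hline r)).deriv
  have hfv : DifferentiableAt ℝ (fun y => fderiv ℝ f y v) (line 0) :=
    hline0 ▸ hf.differentiableAt_fderiv_apply v
  have hmax : IsLocalMax (f ∘ line) 0 :=
    (hline0 ▸ h : IsLocalMax f (line 0)).comp_continuous (hline 0).continuousAt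
  have hcont : ContinuousAt (f ∘ line) 0 :=
    ContinuousAt.comp (hline0 ▸ hf.continuousAt) (hline 0).continuousAt
  calc fderiv ℝ (fun y => fderiv ℝ f y v) x₀ v
      = deriv (deriv (f ∘ line)) 0 := by
        rw [hderiv.deriv_eq, ← hline0]
        exact ((hfv.hasFDerivAt.comp_hasDerivAt 0 (hline 0)).deriv).symm
    _ ≤ 0 := hmax.deriv_deriv_nonpos hcont

theorem le_of_deriv_nonpos_at_spatial_max {X : Type*} [TopologicalSpace X] {Ω : Set X}
    (hΩ : IsCompact (closure Ω)) {T M : ℝ} {u : X × ℝ → ℝ}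
    (hu : ContinuousOn u (closure Ω ×ˢ Icc 0 T))
    (hbdry : ∀ p ∈ frontier Ω ×ˢ Icc 0 T, u p ≤ M) (hinit : ∀ x ∈ Ω, u (x, 0) ≤ M)
    (hdiff : ∀ x ∈ Ω, ∀ t ∈ Ioc 0 T, DifferentiableAt ℝ (fun τ => u (x, τ)) t)
    (hderiv : ∀ x ∈ Ω, ∀ t ∈ Ioc 0 T, M < u (x, t) →
      IsMaxOn (fun y => u (y, t)) Ω x → deriv (fun τ => u (x, τ)) t ≤ 0) :
    ∀ x ∈ Ω, ∀ t ∈ Icc 0 T, u (x, t) ≤ M := by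
  intro x hx t ht
  by_contra! hlt
  set ε := (u (x, t) - M) / (T + 1)
  have hT : 0 ≤ T := ht.1.trans ht.2
  have hε : 0 < ε := div_pos (sub_pos.2 hlt) (by linarith)
  have hεT : ε * t < u (x, t) - M := by
    calc ε * t ≤ ε * T := mul_le_mul_of_nonneg_left ht.2 hε.le
      _ < ε * (T + 1) := by linarith
      _ = u (x, t) - M := div_mul_cancel₀ _ (by linarith)
  obtain ⟨⟨x₀, t₀⟩, ⟨hx₀, ht₀⟩, hmax⟩ :=
    (hΩ.prod isCompact_Icc).exists_isMaxOn ⟨(x, t), subset_closure hx, ht⟩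
      (hu.sub (continuous_const.mul continuous_snd).continuousOn :
        ContinuousOn (fun p => u p - ε * p.2) _)
  have hw : u (x, t) - ε * t ≤ u (x₀, t₀) - ε * t₀ := hmax ⟨subset_closure hx, ht⟩
  have hM : M < u (x₀, t₀) := by linarith [mul_nonneg hε.le ht₀.1]
  have hx₀Ω : x₀ ∈ Ω := by
    by_contra hx₀Ω
    have hfr : x₀ ∈ frontier Ω := ⟨hx₀, fun h => hx₀Ω (interior_subset h)⟩
    exact (hbdry _ ⟨hfr, ht₀⟩).not_gt hM
  have ht₀pos : 0 < t₀ := by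
    refine ht₀.1.lt_of_ne fun h => ?_
    subst h
    exact (hinit x₀ hx₀Ω).not_gt hM
  have hspace : IsMaxOn (fun y => u (y, t₀)) Ω x₀ := fun y hy =>
    (sub_le_sub_iff_right (ε * t₀)).1 (hmax ⟨subset_closure hy, ht₀⟩)
  have htime : ε ≤ deriv (fun τ => u (x₀, τ)) t₀ := by
    have hw' := ((hdiff x₀ hx₀Ω t₀ ⟨ht₀pos, ht₀.2⟩).hasDerivAt.sub
      ((hasDerivAt_id t₀).const_mul ε)).nonneg_of_isMaxOn_Icc ht₀pos
      fun τ hτ => hmax ⟨hx₀, hτ.1, hτ.2.trans ht₀.2⟩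
    simp only [mul_one] at hw'
    linarith
  linarith [hderiv x₀ hx₀Ω t₀ ⟨ht₀pos, ht₀.2⟩ hM hspace]

section PartialDerivatives

variable {f g : (Fin 2 → ℝ) → ℝ} {x₀ : Fin 2 → ℝ}

theorem IsLocalMax.pd_pd_nonpos (h : IsLocalMax f x₀) (hf : ContDiffAt ℝ 2 f x₀) (k : Fin 3) :
    pd k (pd k f) x₀ ≤ 0 :=
  h.fderiv_fderiv_apply_nonpos hf _

theorem pd_add_mul_pd_of_fderiv_eq_zero (hf : ContDiffAt ℝ 2 f x₀) (hg : ContDiffAt ℝ 2 g x₀)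
    (hcrit : fderiv ℝ f x₀ = 0) (k : Fin 3) :
    pd k (fun y => pd k f y + f y * pd k g y) x₀ = pd k (pd k f) x₀ + f x₀ * pd k (pd k g) x₀ := by
  have hf₁ : DifferentiableAt ℝ f x₀ := hf.differentiableAt (by norm_num)
  have hf₂ : DifferentiableAt ℝ (pd k f) x₀ := hf.differentiableAt_fderiv_apply _
  have hg₂ : DifferentiableAt ℝ (pd k g) x₀ := hg.differentiableAt_fderiv_apply _
  change fderiv ℝ (fun y => pd k f y + f y * pd k g y) x₀ _ = _
  rw [fderiv_fun_add hf₂ (hf₁.fun_mul hg₂), fderiv_fun_mul hf₁ hg₂, hcrit]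
  simp only [add_apply, smul_apply, smul_zero, add_zero, smul_eq_mul]
  rfl

theorem IsLocalMax.sum_pd_flux_le (h : IsLocalMax f x₀) (hf : ContDiffAt ℝ 2 f x₀)
    (hg : ContDiffAt ℝ 2 g x₀) :
    ∑ s : Fin 2, pd s.castSucc (fun y => pd s.castSucc f y + f y * pd s.castSucc g y) x₀ ≤
      f x₀ * ∑ s : Fin 2, pd s.castSucc (fun y => pd s.castSucc g y) x₀ := by
  rw [Finset.mul_sum]
  gcongr with s
  rw [pd_add_mul_pd_of_fderiv_eq_zero hf hg h.fderiv_eq_zero]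
  linarith [h.pd_pd_nonpos hf s.castSucc]

end PartialDerivatives

theorem n0_upper_bound_general (Ω : Set (Fin 2 → ℝ)) (hΩo : IsOpen Ω)
    (hΩb : Bornology.IsBounded Ω) (T : ℝ) (hT : 0 < T) (lD : ℝ)
    (C : (Fin 2 → ℝ) → ℝ) (hCc : ContinuousOn C (closure Ω))
    (hC0 : ∀ x ∈ closure Ω, 0 ≤ C x)
    (n₀ V : ((Fin 2 → ℝ) × ℝ) → ℝ)
    (hc₀ : ContinuousOn n₀ (closure Ω ×ˢ Set.Icc 0 T))
    (hx₀ : ∀ t ∈ Set.Ioc (0 : ℝ) T, ContDiffOn ℝ 2 (fun x => n₀ (x, t)) Ω)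
    (hxV : ∀ t ∈ Set.Ioc (0 : ℝ) T, ContDiffOn ℝ 2 (fun x => V (x, t)) Ω)
    (ht₀ : ∀ x ∈ Ω, ∀ t ∈ Set.Ioc (0 : ℝ) T, DifferentiableAt ℝ (fun τ => n₀ (x, τ)) t)
    (hdd : ∀ x ∈ Ω, ∀ t ∈ Set.Ioc (0 : ℝ) T,
      deriv (fun τ => n₀ (x, τ)) t
        = ∑ s : Fin 2, pd s.castSucc (fun y =>
            pd s.castSucc (fun z => n₀ (z, t)) y
              + n₀ (y, t) * pd s.castSucc (fun z => V (z, t)) y) x)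
    (hpois : ∀ x ∈ Ω, ∀ t ∈ Set.Ioc (0 : ℝ) T,
      -lD ^ 2 * (∑ s : Fin 2, pd s.castSucc (fun y => pd s.castSucc (fun z => V (z, t)) y) x)
        = n₀ (x, t) - C x) :
    ∀ x ∈ Ω, ∀ t ∈ Set.Icc (0 : ℝ) T,
      n₀ (x, t) ≤ max (max
        (sSup (n₀ '' (frontier Ω ×ˢ Set.Icc (0 : ℝ) T)))
        (sSup ((fun x => n₀ (x, 0)) '' Ω)))
        (sSup (C '' Ω)) := by
  set M := max (max (sSup (n₀ '' (frontier Ω ×ˢ Set.Icc (0 : ℝ) T)))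
    (sSup ((fun x => n₀ (x, 0)) '' Ω))) (sSup (C '' Ω))
  have hK : IsCompact (closure Ω) := hΩb.isCompact_closure
  have hbdry : ∀ p ∈ frontier Ω ×ˢ Icc 0 T, n₀ p ≤ M := fun p hp =>
    ((hK.prod isCompact_Icc).le_sSup_image_of_subset hc₀
      (prod_mono frontier_subset_closure subset_rfl) hp).trans
      (le_max_of_le_left (le_max_left _ _))
  have hinit : ∀ x ∈ Ω, n₀ (x, 0) ≤ M := fun x hx =>
    (hK.le_sSup_image_of_subset (f := fun x => n₀ (x, 0))
      (hc₀.comp (by fun_prop) fun y hy => ⟨hy, le_rfl, hT.le⟩) subset_closure hx).trans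
      (le_max_of_le_left (le_max_right _ _))
  have hC : ∀ x ∈ Ω, C x ≤ M := fun x hx =>
    (hK.le_sSup_image_of_subset hCc subset_closure hx).trans (le_max_right _ _)
  refine le_of_deriv_nonpos_at_spatial_max hK hc₀ hbdry hinit ht₀ fun x hx t ht hMx hmax => ?_
  have hn₀ : 0 < n₀ (x, t) := (hC0 x (subset_closure hx)).trans_lt ((hC x hx).trans_lt hMx)
  have hloc : IsLocalMax (fun z => n₀ (z, t)) x := hmax.isLocalMax (hΩo.mem_nhds hx)
  have hΔV : ∑ s : Fin 2, pd s.castSucc (fun y => pd s.castSucc (fun z => V (z, t)) y) x < 0 :=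
    neg_of_mul_neg_right (by linarith [hpois x hx t ht, hC x hx]) (sq_nonneg lD)
  rw [hdd x hx t ht]
  exact (hloc.sum_pd_flux_le ((hx₀ t ht).contDiffAt (hΩo.mem_nhds hx))
    ((hxV t ht).contDiffAt (hΩo.mem_nhds hx))).trans
    (mul_nonpos_of_nonneg_of_nonpos hn₀.le hΔV.le)

/-- Maximum principle for the drift-diffusion–Poisson system (upper bound of
Theorem 3.1): for a classical solution of `∂_t n₀ = div(∇n₀ + n₀∇V)`,
`−λ_D² ΔV = n₀ − C` on `Ω × (0,T]` with `C ≥ 0`, one has `n₀ ≤ M` on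
`Ω × [0,T]`, where
`M = max{sup_{∂Ω×[0,T]} n₀, sup_Ω n₀(·,0), sup_Ω C}`. -/
theorem n0_upper_bound (Ω : Set (Fin 2 → ℝ)) (hΩo : IsOpen Ω)
    (hΩb : Bornology.IsBounded Ω) (T : ℝ) (hT : 0 < T) (lD : ℝ) (hlD : 0 < lD)
    (C : (Fin 2 → ℝ) → ℝ) (hCc : ContinuousOn C (closure Ω))
    (hC0 : ∀ x ∈ closure Ω, 0 ≤ C x)
    (n₀ V : ((Fin 2 → ℝ) × ℝ) → ℝ)
    (hc₀ : ContinuousOn n₀ (closure Ω ×ˢ Set.Icc 0 T))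
    (hcV : ContinuousOn V (closure Ω ×ˢ Set.Icc 0 T))
    (hx₀ : ∀ t ∈ Set.Ioc (0 : ℝ) T, ContDiffOn ℝ 2 (fun x => n₀ (x, t)) Ω)
    (hxV : ∀ t ∈ Set.Ioc (0 : ℝ) T, ContDiffOn ℝ 2 (fun x => V (x, t)) Ω)
    (ht₀ : ∀ x ∈ Ω, ∀ t ∈ Set.Ioc (0 : ℝ) T, DifferentiableAt ℝ (fun τ => n₀ (x, τ)) t)
    (hdd : ∀ x ∈ Ω, ∀ t ∈ Set.Ioc (0 : ℝ) T,
      deriv (fun τ => n₀ (x, τ)) t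
        = ∑ s : Fin 2, pd s.castSucc (fun y =>
            pd s.castSucc (fun z => n₀ (z, t)) y
              + n₀ (y, t) * pd s.castSucc (fun z => V (z, t)) y) x)
    (hpois : ∀ x ∈ Ω, ∀ t ∈ Set.Ioc (0 : ℝ) T,
      -lD ^ 2 * (∑ s : Fin 2, pd s.castSucc (fun y => pd s.castSucc (fun z => V (z, t)) y) x)
        = n₀ (x, t) - C x) :
    ∀ x ∈ Ω, ∀ t ∈ Set.Icc (0 : ℝ) T,
      n₀ (x, t) ≤ max (max
        (sSup (n₀ '' (frontier Ω ×ˢ Set.Icc (0 : ℝ) T)))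
        (sSup ((fun x => n₀ (x, 0)) '' Ω)))
        (sSup (C '' Ω)) :=
  n0_upper_bound_general Ω hΩo hΩb T hT lD C hCc hC0 n₀ V hc₀ hx₀ hxV ht₀ hdd hpois
end

section
/- Let n₀ ∈ ℝ and n ∈ ℝ³ satisfy 0 < |n| < n₀. Define A ∈ ℝ by e^{−A} = (1/(2π))√(n₀² − |n|²), and define B ∈ ℝ³ by B = −(n/|n|) log √((n₀+|n|)/(n₀−|n|)). Then ∫_{ℝ²} e^{−(A + |p|²/2)} cosh|B| dp = n₀ and −∫_{ℝ²} e^{−(A + |p|²/2)} (sinh|B|/|B|) B dp = n. -/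
/-!
With `x = |n| / n₀ ∈ (0, 1)` one has `√((n₀ + |n|) / (n₀ - |n|)) = exp (artanh x)`, so
`|B| = artanh x`, and the Gaussian integral `∫_{ℝ²} e^{-|p|²/2} dp = 2π` turns the normalisation
of `A` into `∫ e^{-(A + |p|²/2)} dp = n₀ √(1 - x²)`. Both constraints then follow from
`cosh (artanh x) = 1 / √(1 - x²)` and `sinh (artanh x) = x / √(1 - x²)`.
-/

open MeasureTheory

theorem integral_exp_neg_add_half_sq_norm {V : Type*} [NormedAddCommGroup V]
    [InnerProductSpace ℝ V] [FiniteDimensional ℝ V] [MeasurableSpace V] [BorelSpace V] (A : ℝ) :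
    ∫ v : V, Real.exp (-(A + ‖v‖ ^ 2 / 2)) =
      Real.exp (-A) * (2 * Real.pi) ^ (Module.finrank ℝ V / 2 : ℝ) := by
  have h_split (v : V) :
      Real.exp (-(A + ‖v‖ ^ 2 / 2)) = Real.exp (-A) * Real.exp (-(1 / 2) * ‖v‖ ^ 2) := by
    rw [← Real.exp_add]
    ring_nf
  simp_rw [h_split, integral_const_mul, GaussianFourier.integral_rexp_neg_mul_sq_norm one_half_pos]
  rw [div_div_eq_mul_div, div_one, mul_comm Real.pi]

theorem Real.log_sqrt_add_div_sub_eq_artanh {a r : ℝ} (h : |r| < a) :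
    Real.log √((a + r) / (a - r)) = Real.artanh (r / a) := by
  have ha : 0 < a := (abs_nonneg r).trans_lt h
  have hx : r / a ∈ Set.Ioo (-1) 1 := by
    rw [Set.mem_Ioo, lt_div_iff₀ ha, div_lt_iff₀ ha]
    constructor <;> linarith [abs_lt.mp h]
  have h_div : (a + r) / (a - r) = (1 + r / a) / (1 - r / a) := by
    field_simp
  rw [h_div, ← Real.exp_artanh hx, Real.log_exp]

theorem Real.sqrt_sq_sub_sq_eq_mul_sqrt_one_sub_div_sq {a r : ℝ} (ha : 0 < a) :
    √(a ^ 2 - r ^ 2) = a * √(1 - (r / a) ^ 2) := by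
  rw [← Real.sqrt_sq ha.le, ← Real.sqrt_mul (sq_nonneg a), Real.sqrt_sq ha.le]
  congr 1
  field_simp

/-- The leading-order constraint equations determining the Lagrange multipliers
`A ∈ ℝ` and `B ∈ ℝ³` of the thermal equilibrium Wigner distribution: if
`0 < |n| < n₀`, `e^{−A} = (1/(2π))√(n₀² − |n|²)` and
`B = −(n/|n|) log √((n₀+|n|)/(n₀−|n|))`, then
`∫_{ℝ²} e^{−(A+|p|²/2)} cosh|B| dp = n₀` and
`−∫_{ℝ²} e^{−(A+|p|²/2)} (sinh|B|/|B|) B dp = n`. -/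
theorem equilibrium_constraints (n₀ : ℝ) (n : EuclideanSpace ℝ (Fin 3))
    (h1 : 0 < ‖n‖) (h2 : ‖n‖ < n₀)
    (A : ℝ) (B : EuclideanSpace ℝ (Fin 3))
    (hA : Real.exp (-A) = (1 / (2 * Real.pi)) * Real.sqrt (n₀ ^ 2 - ‖n‖ ^ 2))
    (hB : B = -((Real.log (Real.sqrt ((n₀ + ‖n‖) / (n₀ - ‖n‖))) / ‖n‖) • n)) :
    (∫ p : EuclideanSpace ℝ (Fin 2),
        Real.exp (-(A + ‖p‖ ^ 2 / 2)) * Real.cosh ‖B‖) = n₀ ∧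
    (-∫ p : EuclideanSpace ℝ (Fin 2),
        (Real.exp (-(A + ‖p‖ ^ 2 / 2)) * (Real.sinh ‖B‖ / ‖B‖)) • B) = n := by
  have hn₀ : 0 < n₀ := h1.trans h2
  obtain ⟨x, hx_def⟩ : ∃ x, x = ‖n‖ / n₀ := ⟨_, rfl⟩
  have hx_pos : 0 < x := hx_def ▸ div_pos h1 hn₀
  have hx : x ∈ Set.Ioo (-1) 1 := ⟨by linarith, hx_def ▸ (div_lt_one hn₀).mpr h2⟩
  have hpos : 0 < Real.artanh x := Real.artanh_pos ⟨hx_pos, hx.2⟩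
  have hsqrt : 0 < √(1 - x ^ 2) := Real.sqrt_pos.mpr (by nlinarith [hx.1, hx.2])
  rw [Real.log_sqrt_add_div_sub_eq_artanh (by rwa [abs_of_pos h1]), ← hx_def] at hB
  have hnormB : ‖B‖ = Real.artanh x := by
    rw [hB, norm_neg, norm_smul, Real.norm_eq_abs, abs_of_pos (div_pos hpos h1),
      div_mul_cancel₀ _ h1.ne']
  have hgauss : ∫ p : EuclideanSpace ℝ (Fin 2), Real.exp (-(A + ‖p‖ ^ 2 / 2)) =
      n₀ * √(1 - x ^ 2) := by
    rw [integral_exp_neg_add_half_sq_norm, finrank_euclideanSpace_fin, hA,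
      Real.sqrt_sq_sub_sq_eq_mul_sqrt_one_sub_div_sq hn₀, ← hx_def, Nat.cast_ofNat,
      div_self two_ne_zero, Real.rpow_one]
    field_simp
  constructor
  · rw [integral_mul_const, hgauss, hnormB, Real.cosh_artanh hx]
    field_simp
  · rw [integral_smul_const, integral_mul_const, hgauss, hnormB, Real.sinh_artanh hx, hB,
      smul_neg, neg_neg, smul_smul]
    convert one_smul ℝ n
    field_simp
    rw [hx_def, mul_div_cancel₀ _ hn₀.ne']
end
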